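/- arXiv:2102.01028 — 5 statements merged into one kernel-verified Lean document; each statement's English description precedes it below -/
import Mathlib

section
/- If M is a nonzero closed subspace of X and C(A;M) = B(X), then A is a scalar multiple of the identity operator. -/
/-- If M ≠ {0} and C(A;M) = B(X), then A is a scalar multiple of the identity. -/
theorem stmt_5 {X : Type*} [NormedAddCommGroup X] [NormedSpace ℂ X] [CompleteSpace X]
    (A : X →L[ℂ] X) (M : Submodule ℂ X) (hM : IsClosed (M : Set X)) (hM0 : M ≠ ⊥)
    (h : ∀ T : X →L[ℂ] X, ∀ x ∈ M, T (A x) = A (T x)) :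
    ∃ c : ℂ, A = c • ContinuousLinearMap.id ℂ X := by
  obtain ⟨x₀, hx₀M, hx₀⟩ : ∃ x ∈ M, x ≠ 0 := by
    by_contra hc
    push_neg at hc
    exact hM0 ((Submodule.eq_bot_iff M).mpr hc)
  obtain ⟨f, hf1, hfx⟩ := exists_dual_vector ℂ x₀ (norm_ne_zero_iff.mpr hx₀)
  set g : X →L[ℂ] ℂ := ((‖x₀‖ : ℂ))⁻¹ • f with hg
  have hgx : g x₀ = 1 := by
    have : (‖x₀‖ : ℂ) ≠ 0 := by
      exact_mod_cast norm_ne_zero_iff.mpr hx₀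
    simp [hg, hfx]
    field_simp
  refine ⟨g (A x₀), ?_⟩
  ext y
  have := h (g.smulRight y) x₀ hx₀M
  simpa [ContinuousLinearMap.smulRight_apply, hgx] using this.symm
end

section
/- Let N = closure of the span of {Sx : S ∈ I(A,B;M), x ∈ M} ⊆ Y. Then C(B;N) is a subalgebra of B(Y), and it is the largest subalgebra of B(Y) under whose left multiplication I(A,B;M) is stable, i.e., T·I(A,B;M) ⊆ I(A,B;M) for T ∈ B(Y) if and only if T ∈ C(B;N). -/
/-- With N the closed span of I(A,B;M)·M, C(B;N) is a subalgebra of B(Y) and is the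
largest algebra under whose left multiplication I(A,B;M) is stable. -/
theorem stmt_8 {X Y : Type*} [NormedAddCommGroup X] [NormedSpace ℂ X] [CompleteSpace X]
    [NormedAddCommGroup Y] [NormedSpace ℂ Y] [CompleteSpace Y]
    (A : X →L[ℂ] X) (B : Y →L[ℂ] Y) (M : Submodule ℂ X) (hM : IsClosed (M : Set X))
    (N : Submodule ℂ Y)
    (hN : N = (Submodule.span ℂ
      {y : Y | ∃ S : X →L[ℂ] Y, (∀ x ∈ M, S (A x) = B (S x)) ∧ ∃ x ∈ M, y = S x}).topologicalClosure) :
    (∀ T₁ T₂ : Y →L[ℂ] Y,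
      (∀ y ∈ N, T₁ (B y) = B (T₁ y)) → (∀ y ∈ N, T₂ (B y) = B (T₂ y)) →
      ∀ y ∈ N, (T₁.comp T₂) (B y) = B ((T₁.comp T₂) y)) ∧
    (∀ T : Y →L[ℂ] Y,
      ((∀ S : X →L[ℂ] Y, (∀ x ∈ M, S (A x) = B (S x)) →
        ∀ x ∈ M, (T.comp S) (A x) = B ((T.comp S) x)) ↔
      (∀ y ∈ N, T (B y) = B (T y)))) := by
  set gen : Set Y :=
    {y : Y | ∃ S : X →L[ℂ] Y, (∀ x ∈ M, S (A x) = B (S x)) ∧ ∃ x ∈ M, y = S x} with hgen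
  have hgenN : gen ⊆ (N : Set Y) := by
    rw [hN]
    exact fun z hz => (Submodule.span ℂ gen).le_topologicalClosure (Submodule.subset_span hz)
  -- If T commutes with B on generators, it commutes with B on N.
  have key : ∀ T : Y →L[ℂ] Y, (∀ y ∈ gen, T (B y) = B (T y)) → ∀ y ∈ N, T (B y) = B (T y) := by
    intro T hT y hy
    have hker : N ≤ LinearMap.ker ((T.comp B - B.comp T : Y →L[ℂ] Y) : Y →ₗ[ℂ] Y) := by
      rw [hN]
      apply Submodule.topologicalClosure_minimal
      · rw [Submodule.span_le]
        intro z hz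
        simp only [SetLike.mem_coe, LinearMap.mem_ker, ContinuousLinearMap.coe_coe, ContinuousLinearMap.coe_sub',
          Pi.sub_apply, ContinuousLinearMap.coe_comp', Function.comp_apply, sub_eq_zero]
        exact hT z hz
      · exact ContinuousLinearMap.isClosed_ker _
    have := hker hy
    simpa only [LinearMap.mem_ker, ContinuousLinearMap.coe_coe, ContinuousLinearMap.coe_sub', Pi.sub_apply,
      ContinuousLinearMap.coe_comp', Function.comp_apply, sub_eq_zero] using this
  -- Forward direction: commuting on N gives stability of intertwiners.
  have fwd : ∀ T : Y →L[ℂ] Y, (∀ y ∈ N, T (B y) = B (T y)) →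
      ∀ S : X →L[ℂ] Y, (∀ x ∈ M, S (A x) = B (S x)) →
      ∀ x ∈ M, (T.comp S) (A x) = B ((T.comp S) x) := by
    intro T hT S hS x hx
    have hSx : S x ∈ N := hgenN ⟨S, hS, x, hx, rfl⟩
    simp only [ContinuousLinearMap.coe_comp', Function.comp_apply]
    rw [hS x hx, hT _ hSx]
  refine ⟨?_, ?_⟩
  · intro T₁ T₂ h₁ h₂ y hy
    -- T₂ maps N into N
    have hT₂N : ∀ z ∈ N, T₂ z ∈ N := by
      intro z hz
      have hNclosed : IsClosed (N : Set Y) := by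
        rw [hN]; exact Submodule.isClosed_topologicalClosure _
      have hcl : (Submodule.span ℂ gen).topologicalClosure ≤ N.comap (T₂ : Y →ₗ[ℂ] Y) := by
        apply Submodule.topologicalClosure_minimal
        · rw [Submodule.span_le]
          rintro w ⟨S, hS, x, hx, rfl⟩
          have : (T₂.comp S) x ∈ gen := ⟨T₂.comp S, fwd T₂ h₂ S hS, x, hx, rfl⟩
          exact hgenN this
        · exact hNclosed.preimage T₂.continuous
      have hcomap : N ≤ N.comap (T₂ : Y →ₗ[ℂ] Y) := hN ▸ hcl
      exact hcomap hz
    simp only [ContinuousLinearMap.coe_comp', Function.comp_apply]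
    rw [h₂ y hy, h₁ _ (hT₂N y hy)]
  · intro T
    constructor
    · intro hstab
      apply key
      rintro y ⟨S, hS, x, hx, rfl⟩
      have h1 := hstab S hS x hx
      simp only [ContinuousLinearMap.coe_comp', Function.comp_apply] at h1
      rw [← hS x hx]
      exact h1
    · intro hT
      exact fwd T hT
end

section
/- If C(A;M) is an algebra (closed under composition), then every T ∈ C(A;M) maps M into the girder M_A, i.e., C(A;M)·M ⊆ M_A. -/
/-- If C(A;M) is closed under composition, then every T ∈ C(A;M) maps M into the girder M_A. -/
theorem stmt_12 {X : Type*} [NormedAddCommGroup X] [NormedSpace ℂ X] [CompleteSpace X]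
    (A : X →L[ℂ] X) (M : Submodule ℂ X) (hM : IsClosed (M : Set X))
    (halg : ∀ T S : X →L[ℂ] X, (∀ x ∈ M, T (A x) = A (T x)) →
      (∀ x ∈ M, S (A x) = A (S x)) → ∀ x ∈ M, (T.comp S) (A x) = A ((T.comp S) x)) :
    ∀ T : X →L[ℂ] X, (∀ x ∈ M, T (A x) = A (T x)) → ∀ x ∈ M,
      T x ∈ {z : X | ∀ S : X →L[ℂ] X, (∀ m ∈ M, S (A m) = A (S m)) → S (A z) = A (S z)} := by
  intro T hT x hx S hS
  have h := halg S T hS hT x hx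
  simp only [ContinuousLinearMap.comp_apply] at h
  rw [← hT x hx, h]
end

section
/- If T·M ⊆ M_A for every T ∈ C(A;M) (i.e., C(A;M)·M ⊆ M_A), then C(A;M) is closed under composition, hence a subalgebra of B(X). -/
/-- If C(A;M)·M ⊆ M_A, then C(A;M) is closed under composition. -/
theorem stmt_13 {X : Type*} [NormedAddCommGroup X] [NormedSpace ℂ X] [CompleteSpace X]
    (A : X →L[ℂ] X) (M : Submodule ℂ X) (hM : IsClosed (M : Set X))
    (h : ∀ T : X →L[ℂ] X, (∀ x ∈ M, T (A x) = A (T x)) → ∀ x ∈ M,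
      T x ∈ {z : X | ∀ S : X →L[ℂ] X, (∀ m ∈ M, S (A m) = A (S m)) → S (A z) = A (S z)}) :
    ∀ T S : X →L[ℂ] X, (∀ x ∈ M, T (A x) = A (T x)) → (∀ x ∈ M, S (A x) = A (S x)) →
      ∀ x ∈ M, (T.comp S) (A x) = A ((T.comp S) x) := by
  intro T S hT hS x hx
  have h1 : S (A x) = A (S x) := hS x hx
  have h2 : T (A (S x)) = A (T (S x)) := h S hS x hx T hT
  simp [ContinuousLinearMap.comp_apply, h1, h2]
end

section
/- Let A be a nilpotent operator with A^n = 0 and let 1 ≤ j ≤ n. For any e ∈ ker(A^j) and any continuous linear functional ξ on X, the operator T = Σ_{i=0}^{j-1} A^i (e ⊗ ξ) A^{j-1-i} (where e ⊗ ξ is the rank-one operator x ↦ ξ(x)e) belongs to C(A; closure of im(A^{n-j})). -/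
/-- For a nilpotent A with Aⁿ = 0, e ∈ ker(Aʲ) and ξ ∈ X*, the operator
Σ_{i=0}^{j-1} Aⁱ (e ⊗ ξ) A^{j-1-i} belongs to C(A; closure(im A^{n-j})). -/
theorem stmt_18 {X : Type*} [NormedAddCommGroup X] [NormedSpace ℂ X] [CompleteSpace X]
    (A : X →L[ℂ] X) (n j : ℕ) (hn : A ^ n = 0) (hj1 : 1 ≤ j) (hjn : j ≤ n)
    (e : X) (he : (A ^ j) e = 0) (ξ : X →L[ℂ] ℂ) :
    ∀ x ∈ closure (Set.range ⇑(A ^ (n - j))),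
      (∑ i ∈ Finset.range j, (A ^ i).comp ((ξ.smulRight e).comp (A ^ (j - 1 - i)))) (A x)
        = A ((∑ i ∈ Finset.range j, (A ^ i).comp ((ξ.smulRight e).comp (A ^ (j - 1 - i)))) x) := by
  set T : X →L[ℂ] X :=
    ∑ i ∈ Finset.range j, (A ^ i).comp ((ξ.smulRight e).comp (A ^ (j - 1 - i))) with hT
  obtain ⟨k, rfl⟩ : ∃ k, j = k + 1 := ⟨j - 1, (Nat.succ_pred_eq_of_pos hj1).symm⟩
  have hkey : ∀ x : X, T (A x) = A (T x) + ξ ((A ^ (k + 1)) x) • e := by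
    intro x
    have hL : T (A x) = ∑ i ∈ Finset.range (k + 1), ξ ((A ^ (k - i + 1)) x) • (A ^ i) e := by
      rw [hT]
      simp only [ContinuousLinearMap.sum_apply, ContinuousLinearMap.comp_apply,
        ContinuousLinearMap.smulRight_apply, map_smul, Nat.add_sub_cancel]
      refine Finset.sum_congr rfl fun i hi => ?_
      have : (A ^ (k - i)) (A x) = (A ^ (k - i + 1)) x := by
        rw [pow_succ]; rfl
      rw [this]
    have hR : A (T x) = ∑ i ∈ Finset.range (k + 1), ξ ((A ^ (k - i)) x) • (A ^ (i + 1)) e := by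
      rw [hT]
      simp only [ContinuousLinearMap.sum_apply, ContinuousLinearMap.comp_apply,
        ContinuousLinearMap.smulRight_apply, map_sum, map_smul, Nat.add_sub_cancel]
      refine Finset.sum_congr rfl fun i hi => ?_
      have : A ((A ^ i) e) = (A ^ (i + 1)) e := by rw [pow_succ']; rfl
      rw [this]
    rw [hL, hR]
    rw [Finset.sum_range_succ' (fun i => ξ ((A ^ (k - i + 1)) x) • (A ^ i) e),
      Finset.sum_range_succ (fun i => ξ ((A ^ (k - i)) x) • (A ^ (i + 1)) e)]
    simp only [Nat.sub_self, pow_zero, ContinuousLinearMap.one_apply, Nat.sub_zero]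
    rw [he]
    simp only [smul_zero, add_zero]
    congr 1
    refine Finset.sum_congr rfl fun i hi => ?_
    have hik : i < k := Finset.mem_range.mp hi
    have : k - (i + 1) + 1 = k - i := by omega
    rw [this]
  have hclosed : IsClosed {x : X | T (A x) = A (T x)} :=
    isClosed_eq (T.continuous.comp A.continuous) (A.continuous.comp T.continuous)
  have hsub : Set.range ⇑(A ^ (n - (k + 1))) ⊆ {x : X | T (A x) = A (T x)} := by
    rintro _ ⟨y, rfl⟩
    have : (A ^ (k + 1)) ((A ^ (n - (k + 1))) y) = (A ^ n) y := by
      rw [← ContinuousLinearMap.comp_apply, ← ContinuousLinearMap.mul_def, ← pow_add]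
      congr 2
      omega
    simp only [Set.mem_setOf_eq, hkey, this, hn]
    simp
  intro x hx
  exact closure_minimal hsub hclosed hx
end
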